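/- If p is the order k ≥ 1 Bernstein polynomial of ReLU on [a,b] with a < 0 < b, then the derivative of p at a is nonnegative and the derivative of p at b is at most 1. -/

import Mathlib

open Set

noncomputable def bern (f : ℝ → ℝ) (a b : ℝ) (k : ℕ) (x : ℝ) : ℝ :=
  ∑ i ∈ Finset.range (k + 1),
    f (a + (i / k : ℝ) * (b - a)) * (k.choose i : ℝ) *
      ((x - a) / (b - a)) ^ i * ((b - x) / (b - a)) ^ (k - i)

noncomputable def relu (x : ℝ) : ℝ := max x 0

/-!
The substitution `t = (x - a) / (b - a)` turns `bern f a b k` into the polynomial `∑ cᵢ B_{k,i}(t)`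
in Mathlib's Bernstein basis, with `cᵢ = f (a + i (b - a) / k)`. Its derivative is `k (c₁ - c₀)` at
`t = 0` and, by the symmetry `B_{k,i}(1 - t) = B_{k,k-i}(t)`, `k (c_k - c_{k-1})` at `t = 1`. So
`p'(a) = k (c₁ - c₀) / (b - a)` is nonnegative for monotone `f`, and
`p'(b) = k (c_k - c_{k-1}) / (b - a)` is at most `1` for `1`-Lipschitz `f`, since consecutive nodes
are `(b - a) / k` apart. ReLU is monotone and `1`-Lipschitz.
-/

open Polynomial Finset

section BernsteinBasis

variable {R : Type*} [CommRing R]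

lemma derivative_sum_bernstein_eval_zero (c : ℕ → R) (k : ℕ) :
    (derivative (∑ i ∈ range (k + 1), c i • bernsteinPolynomial R k i)).eval 0 =
      k * (c 1 - c 0) := by
  rcases k with - | k
  · simp [bernsteinPolynomial]
  have hB₀ : (derivative (bernsteinPolynomial R (k + 1) 0)).eval 0 = -(k + 1 : R) := by
    simp [bernsteinPolynomial.derivative_zero, bernsteinPolynomial.eval_at_0]
  have hB : ∀ i, (derivative (bernsteinPolynomial R (k + 1) (i + 1))).eval 0 =
      if i = 0 then (k + 1 : R) else 0 := by
    intro i
    simp [bernsteinPolynomial.derivative_succ, bernsteinPolynomial.eval_at_0]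
  rw [sum_range_succ', derivative_add, derivative_sum, eval_add, eval_finsetSum]
  simp only [derivative_smul, eval_smul, hB, hB₀, smul_eq_mul, mul_ite, mul_zero, sum_ite_eq',
    Finset.mem_range, Nat.zero_lt_succ, if_true]
  push_cast
  ring

lemma sum_bernstein_eq_comp_one_sub_X (c : ℕ → R) (k : ℕ) :
    ∑ i ∈ range (k + 1), c i • bernsteinPolynomial R k i =
      (∑ i ∈ range (k + 1), c (k - i) • bernsteinPolynomial R k i).comp (1 - X) := by
  rw [Polynomial.sum_comp, ← sum_range_reflect _ (k + 1)]
  refine sum_congr rfl fun i hi => ?_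
  rw [smul_comp, Nat.add_sub_cancel,
    bernsteinPolynomial.flip _ _ _ (Nat.lt_succ_iff.mp (mem_range.mp hi))]

lemma derivative_sum_bernstein_eval_one (c : ℕ → R) (k : ℕ) :
    (derivative (∑ i ∈ range (k + 1), c i • bernsteinPolynomial R k i)).eval 1 =
      k * (c k - c (k - 1)) := by
  rw [sum_bernstein_eq_comp_one_sub_X, derivative_comp_one_sub_X, eval_neg, eval_comp,
    eval_sub, eval_one, eval_X, sub_self, derivative_sum_bernstein_eval_zero, Nat.sub_zero]
  ring

end BernsteinBasis

lemma bern_eq_eval (f : ℝ → ℝ) {a b : ℝ} (hab : a ≠ b) (k : ℕ) (x : ℝ) :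
    bern f a b k x = (∑ i ∈ range (k + 1),
      f (a + (i / k : ℝ) * (b - a)) • bernsteinPolynomial ℝ k i).eval ((x - a) / (b - a)) := by
  have hv : 1 - (x - a) / (b - a) = (b - x) / (b - a) := by
    field_simp [sub_ne_zero.mpr hab.symm]
    ring
  simp only [bern, eval_finsetSum, eval_smul, bernsteinPolynomial, eval_mul, eval_pow, eval_sub,
    eval_one, eval_X, eval_natCast, hv, smul_eq_mul, mul_assoc]

lemma hasDerivAt_bern (f : ℝ → ℝ) {a b : ℝ} (hab : a ≠ b) (k : ℕ) (x : ℝ) :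
    HasDerivAt (bern f a b k) ((derivative (∑ i ∈ range (k + 1),
      f (a + (i / k : ℝ) * (b - a)) • bernsteinPolynomial ℝ k i)).eval ((x - a) / (b - a)) /
        (b - a)) x := by
  have hu : HasDerivAt (fun x : ℝ => (x - a) / (b - a)) (1 / (b - a)) x :=
    ((hasDerivAt_id x).sub_const a).div_const (b - a)
  rw [funext (bern_eq_eval f hab k), div_eq_mul_one_div]
  exact (Polynomial.hasDerivAt _ _).comp x hu

lemma deriv_bern_left (f : ℝ → ℝ) {a b : ℝ} (hab : a ≠ b) (k : ℕ) :
    deriv (bern f a b k) a = k * (f (a + (b - a) / k) - f a) / (b - a) := by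
  rw [(hasDerivAt_bern f hab k a).deriv, sub_self, zero_div, derivative_sum_bernstein_eval_zero]
  simp [inv_mul_eq_div]

lemma deriv_bern_right (f : ℝ → ℝ) {a b : ℝ} (hab : a ≠ b) {k : ℕ} (hk : 0 < k) :
    deriv (bern f a b k) b = k * (f b - f (b - (b - a) / k)) / (b - a) := by
  rw [(hasDerivAt_bern f hab k b).deriv, div_self (sub_ne_zero.mpr hab.symm),
    derivative_sum_bernstein_eval_one, Nat.cast_pred hk]
  have hk' : (k : ℝ) ≠ 0 := by positivity
  have hlast : a + (k / k : ℝ) * (b - a) = b := by rw [div_self hk']; ring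
  have hprev : a + ((k - 1) / k : ℝ) * (b - a) = b - (b - a) / k := by field_simp; ring
  rw [hlast, hprev]

lemma deriv_bern_left_nonneg_of_monotone {f : ℝ → ℝ} (hf : Monotone f) {a b : ℝ} (hab : a < b)
    (k : ℕ) : 0 ≤ deriv (bern f a b k) a := by
  have hba : 0 ≤ b - a := sub_nonneg.mpr hab.le
  rw [deriv_bern_left f hab.ne]
  have hmono : f a ≤ f (a + (b - a) / k) := hf (le_add_of_nonneg_right (by positivity))
  exact div_nonneg (mul_nonneg k.cast_nonneg (sub_nonneg.mpr hmono)) hba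

lemma deriv_bern_right_le_one_of_lipschitzWith {f : ℝ → ℝ} (hf : LipschitzWith 1 f) {a b : ℝ}
    (hab : a < b) {k : ℕ} (hk : 0 < k) : deriv (bern f a b k) b ≤ 1 := by
  have hba : 0 < b - a := sub_pos.mpr hab
  have hk' : (0 : ℝ) < k := by positivity
  have hstep : f b - f (b - (b - a) / k) ≤ (b - a) / k := by
    have hlip := hf.dist_le_mul b (b - (b - a) / k)
    rw [NNReal.coe_one, one_mul, Real.dist_eq, Real.dist_eq, sub_sub_cancel,
      abs_of_pos (div_pos hba hk')] at hlip
    exact (le_abs_self _).trans hlip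
  rw [deriv_bern_right f hab.ne hk, div_le_one hba]
  calc (k : ℝ) * (f b - f (b - (b - a) / k)) ≤ k * ((b - a) / k) := by gcongr
    _ = b - a := by field_simp

lemma monotone_relu : Monotone relu := monotone_id.max monotone_const

lemma lipschitzWith_one_relu : LipschitzWith 1 relu := LipschitzWith.id.max_const 0

theorem bernstein_relu_deriv_endpoints (a b : ℝ) (k : ℕ)
    (ha : a < 0) (hb : 0 < b) (hk : 1 ≤ k) :
    0 ≤ deriv (bern relu a b k) a ∧ deriv (bern relu a b k) b ≤ 1 := by
  have hab : a < b := ha.trans hb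
  exact ⟨deriv_bern_left_nonneg_of_monotone monotone_relu hab k,
    deriv_bern_right_le_one_of_lipschitzWith lipschitzWith_one_relu hab hk⟩
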